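/- arXiv:2202.06561 — 2 statements merged into one kernel-verified Lean document; each statement's English description precedes it below -/
import Mathlib

section
/- The minimum norm point m_ℝ of an integral base-polyhedron B (the unique minimizer of Σ x(s)² over B) is also a minimizer over B of the piecewise-linear function W̄(x) = Σ_{s∈S} φ̄(x(s)), where φ̄ is the piecewise-linear extension of k ↦ k². -/
open Finset

variable {α : Type*} [Fintype α] [DecidableEq α]

def Supermodular (p : Finset α → EReal) : Prop :=
  ∀ X Y : Finset α, p X + p Y ≤ p (X ∩ Y) + p (X ∪ Y)

/-- `p` takes values in `ℤ ∪ {−∞}`. -/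
def IntegerValued (p : Finset α → EReal) : Prop :=
  ∀ X : Finset α, p X = ⊥ ∨ ∃ n : ℤ, p X = ((n : ℝ) : EReal)

/-- `x` belongs to the base-polyhedron `B'(p)`:
`x(S) = p(S)` and `x(Z) ≥ p(Z)` for every `Z ⊆ S`. -/
def memB (p : Finset α → EReal) (x : α → ℝ) : Prop :=
  ((∑ s, x s : ℝ) : EReal) = p Finset.univ ∧
    ∀ Z : Finset α, p Z ≤ ((∑ s ∈ Z, x s : ℝ) : EReal)

/-- `x` is an integral element of the base-polyhedron `B'(p)` (a member of the
M-convex set `B ∩ ℤ^S`). -/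
def memBZ (p : Finset α → EReal) (x : α → ℤ) : Prop :=
  ((((∑ s, x s : ℤ) : ℝ)) : EReal) = p Finset.univ ∧
    ∀ Z : Finset α, p Z ≤ ((((∑ s ∈ Z, x s : ℤ) : ℝ)) : EReal)

/-- Lexicographic comparison `l1 ≤_lex l2` of lists. -/
def lexLE {β : Type*} [LT β] (l1 l2 : List β) : Prop :=
  l1 = l2 ∨ List.Lex (· < ·) l1 l2

/-- The components of `x` sorted in decreasing order. -/
noncomputable def sortDescR (x : α → ℝ) : List ℝ :=
  (Multiset.sort (Finset.univ.val.map x) (· ≤ ·)).reverse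

/-- The components of the integral vector `x` sorted in decreasing order. -/
def sortDescZ (x : α → ℤ) : List ℤ :=
  (Multiset.sort (Finset.univ.val.map x) (· ≤ ·)).reverse

/-- `m` is a decreasingly minimal element of the base-polyhedron `B'(p)`. -/
def DecMinR (p : Finset α → EReal) (m : α → ℝ) : Prop :=
  memB p m ∧ ∀ y : α → ℝ, memB p y → lexLE (sortDescR m) (sortDescR y)

/-- `m` is a decreasingly minimal element of the M-convex set `B'(p) ∩ ℤ^S`. -/
def DecMinZ (p : Finset α → EReal) (m : α → ℤ) : Prop :=
  memBZ p m ∧ ∀ y : α → ℤ, memBZ p y → lexLE (sortDescZ m) (sortDescZ y)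

/-- The piecewise-linear extension of `k ↦ k²`:
`φ̄(ξ) = (2k+1)|ξ| − k(k+1)` with `k = ⌊|ξ|⌋`. -/
noncomputable def phibar (ξ : ℝ) : ℝ :=
  (2 * (⌊|ξ|⌋ : ℝ) + 1) * |ξ| - (⌊|ξ|⌋ : ℝ) * ((⌊|ξ|⌋ : ℝ) + 1)

/-- `W̄(x) = Σ_{s∈S} φ̄(x(s))`. -/
noncomputable def Wbar {α : Type*} [Fintype α] (x : α → ℝ) : ℝ :=
  ∑ s, phibar (x s)

/-!
The minimum norm point `x` admits no exchange `x + ε (χ_t - χ_s)` with `x t < x s` inside `B`,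
since such a step lowers the square sum; so some `x`-tight set contains `s` but not `t`. Tight
sets are closed under `∩` and `∪` by supermodularity, hence every superlevel set `L = {x ≥ c}` is
an intersection-union of tight sets and is tight: `y(L) ≥ p(L) = x(L)` for all `y ∈ B`. Summation
by parts over the integer levels turns this into `∑ ⌊x(s)⌋ (y(s) - x(s)) ≥ 0`, and since
`2⌊ξ⌋ + 1` is a subgradient of `φ̄` at `ξ` (the slope of its chord through `⌊ξ⌋`),
`W̄(y) ≥ W̄(x) + ∑ (2⌊x(s)⌋ + 1) (y(s) - x(s)) ≥ W̄(x)`.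
-/

/-- The chord of `x ↦ x²` through `(k, k²)` and `(k + 1, (k + 1)²)`. -/
def sqChord (k : ℤ) (x : ℝ) : ℝ :=
  (2 * k + 1) * x - k * (k + 1)

lemma sqChord_le_sqChord_floor (k : ℤ) (x : ℝ) : sqChord k x ≤ sqChord ⌊x⌋ x := by
  have h₁ : (⌊x⌋ : ℝ) ≤ x := Int.floor_le x
  have h₂ : x < ⌊x⌋ + 1 := Int.lt_floor_add_one x
  unfold sqChord
  rcases lt_trichotomy k ⌊x⌋ with h | h | h
  · have : (k : ℝ) + 1 ≤ ⌊x⌋ := by exact_mod_cast h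
    nlinarith
  · rw [h]
  · have : (⌊x⌋ : ℝ) + 1 ≤ k := by exact_mod_cast h
    nlinarith

lemma sqChord_neg (k : ℤ) (x : ℝ) : sqChord k (-x) = sqChord (-k - 1) x := by
  unfold sqChord; push_cast; ring

lemma sqChord_floor_neg (x : ℝ) : sqChord ⌊-x⌋ (-x) = sqChord ⌊x⌋ x := by
  apply le_antisymm
  · rw [sqChord_neg]; exact sqChord_le_sqChord_floor _ x
  · calc sqChord ⌊x⌋ x = sqChord (-⌊x⌋ - 1) (-x) := by
          rw [sqChord_neg, neg_sub, sub_neg_eq_add, add_sub_cancel_left]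
      _ ≤ sqChord ⌊-x⌋ (-x) := sqChord_le_sqChord_floor _ _

lemma phibar_eq_sqChord_floor (x : ℝ) : phibar x = sqChord ⌊x⌋ x := by
  rcases le_or_gt 0 x with hx | hx
  · rw [phibar, abs_of_nonneg hx, sqChord]
  · rw [phibar, abs_of_neg hx, ← sqChord_floor_neg, sqChord]

lemma sqChord_le_phibar (k : ℤ) (x : ℝ) : sqChord k x ≤ phibar x :=
  phibar_eq_sqChord_floor x ▸ sqChord_le_sqChord_floor k x

lemma phibar_add_floor_mul_sub_le (x y : ℝ) :
    phibar x + (2 * ⌊x⌋ + 1) * (y - x) ≤ phibar y := by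
  calc phibar x + (2 * ⌊x⌋ + 1) * (y - x) = sqChord ⌊x⌋ y := by
        rw [phibar_eq_sqChord_floor, sqChord, sqChord]; ring
    _ ≤ phibar y := sqChord_le_phibar _ _


lemma intCast_sub_eq_sum_Ioc_ite {K M n : ℤ} (hK : K ≤ n) (hM : n ≤ M) :
    ((n - K : ℤ) : ℝ) = ∑ k ∈ Ioc K M, if k ≤ n then (1 : ℝ) else 0 := by
  have : (Ioc K M).filter (· ≤ n) = Ioc K n := by
    ext k; simp only [mem_filter, mem_Ioc]; omega
  rw [sum_boole, this]
  exact_mod_cast (Int.card_Ioc_of_le _ _ hK).symm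

/-- Summation by parts along the superlevel sets of `g`. -/
lemma sum_intCast_mul_nonneg_of_sum_superlevel_nonneg {ι : Type*} (s : Finset ι) (g : ι → ℤ)
    (d : ι → ℝ) (hd : ∑ u ∈ s, d u = 0)
    (hlevel : ∀ k : ℤ, 0 ≤ ∑ u ∈ s.filter (fun u => k ≤ g u), d u) :
    0 ≤ ∑ u ∈ s, (g u : ℝ) * d u := by
  obtain ⟨K, hK⟩ := (s.image g).bddBelow
  obtain ⟨M, hM⟩ := (s.image g).bddAbove
  have hK' : ∀ u ∈ s, K ≤ g u := fun u hu => hK (mem_image_of_mem g hu)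
  have hM' : ∀ u ∈ s, g u ≤ M := fun u hu => hM (mem_image_of_mem g hu)
  calc 0 ≤ ∑ k ∈ Ioc K M, ∑ u ∈ s.filter (fun u => k ≤ g u), d u :=
        sum_nonneg fun k _ => hlevel k
    _ = ∑ u ∈ s, ((g u - K : ℤ) : ℝ) * d u := by
        simp only [sum_filter]
        rw [sum_comm]
        refine sum_congr rfl fun u hu => ?_
        rw [intCast_sub_eq_sum_Ioc_ite (hK' u hu) (hM' u hu), sum_mul]
        simp only [ite_mul, one_mul, zero_mul]
    _ = ∑ u ∈ s, (g u : ℝ) * d u := by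
        simp only [Int.cast_sub, sub_mul, sum_sub_distrib, ← mul_sum, hd, mul_zero, sub_zero]


lemma EReal.eq_coe_and_eq_coe_of_coe_add_le {a b : EReal} {r t : ℝ} (ha : a ≤ r) (hb : b ≤ t)
    (h : ((r + t : ℝ) : EReal) ≤ a + b) : a = r ∧ b = t := by
  induction a using EReal.rec with
  | bot => simp at h
  | top => simp at ha
  | coe a =>
    induction b using EReal.rec with
    | bot => simp at h
    | top => simp at hb
    | coe b =>
      rw [← EReal.coe_add, EReal.coe_le_coe_iff] at h
      rw [EReal.coe_le_coe_iff] at ha hb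
      constructor <;> (rw [EReal.coe_eq_coe_iff]; linarith)

lemma sum_add_single_sub_single {ι : Type*} [DecidableEq ι] (x : ι → ℝ) (s t : ι) (ε : ℝ)
    (Z : Finset ι) :
    ∑ u ∈ Z, (x + Pi.single t ε - Pi.single s ε : ι → ℝ) u
      = ∑ u ∈ Z, x u + (if t ∈ Z then ε else 0) - (if s ∈ Z then ε else 0) := by
  simp only [Pi.sub_apply, Pi.add_apply, sum_sub_distrib, sum_add_distrib, sum_pi_single']

lemma sum_sq_add_single_sub_single (x : α → ℝ) {s t : α} (hst : s ≠ t) (ε : ℝ) :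
    ∑ u, (x + Pi.single t ε - Pi.single s ε : α → ℝ) u ^ 2
      = ∑ u, x u ^ 2 + 2 * ε * (x t - x s) + 2 * ε ^ 2 := by
  have hdiff : ∑ u, ((x + Pi.single t ε - Pi.single s ε : α → ℝ) u ^ 2 - x u ^ 2)
      = ((x s - ε) ^ 2 - x s ^ 2) + ((x t + ε) ^ 2 - x t ^ 2) := by
    rw [Fintype.sum_eq_add s t hst fun u hu => by simp [hu.1, hu.2]]
    simp [hst, hst.symm]
  rw [sum_sub_distrib] at hdiff
  linear_combination hdiff

def IsTight (p : Finset α → EReal) (x : α → ℝ) (Z : Finset α) : Prop :=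
  p Z = ((∑ s ∈ Z, x s : ℝ) : EReal)

def IsMinNormPoint (p : Finset α → EReal) (x : α → ℝ) : Prop :=
  memB p x ∧ ∀ y : α → ℝ, memB p y → ∑ u, x u ^ 2 ≤ ∑ u, y u ^ 2

open Filter Topology

section Tight

variable {p : Finset α → EReal} {x : α → ℝ}

lemma IsTight.inter_union (hsup : Supermodular p) (hx : memB p x) {X Y : Finset α}
    (hX : IsTight p x X) (hY : IsTight p x Y) : IsTight p x (X ∩ Y) ∧ IsTight p x (X ∪ Y) := by
  have h := hsup X Y
  rw [hX, hY, ← EReal.coe_add, ← sum_union_inter, add_comm] at h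
  exact EReal.eq_coe_and_eq_coe_of_coe_add_le (hx.2 _) (hx.2 _) h

lemma memB_add_single_sub_single (hx : memB p x) {s t : α} {ε : ℝ} (hε : 0 ≤ ε)
    (hslack : ∀ Z : Finset α, s ∈ Z → t ∉ Z → p Z ≤ ((∑ u ∈ Z, x u - ε : ℝ) : EReal)) :
    memB p (x + Pi.single t ε - Pi.single s ε : α → ℝ) := by
  refine ⟨?_, fun Z => ?_⟩
  · rw [sum_add_single_sub_single]
    simpa only [mem_univ, if_true, add_sub_cancel_right] using hx.1
  rw [sum_add_single_sub_single]
  by_cases hs : s ∈ Z <;> by_cases ht : t ∈ Z <;>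
    simp only [hs, ht, if_true, if_false, add_zero, add_sub_cancel_right, sub_zero]
  · exact hx.2 Z
  · exact hslack Z hs ht
  · exact (hx.2 Z).trans (EReal.coe_le_coe_iff.2 (by linarith))
  · exact hx.2 Z

/-- A minimum norm point cannot be improved by moving a small amount `ε` from a larger component
`s` to a smaller one `t`; this move stays in `B` unless some tight set separates `s` from `t`. -/
lemma IsMinNormPoint.exists_isTight_mem_not_mem (hx : IsMinNormPoint p x) {s t : α}
    (hst : x t < x s) :
    ∃ Z, IsTight p x Z ∧ s ∈ Z ∧ t ∉ Z := by
  by_contra! hnone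
  have hslack : ∀ᶠ ε in 𝓝 (0 : ℝ),
      ∀ Z : Finset α, s ∈ Z → t ∉ Z → p Z ≤ ((∑ u ∈ Z, x u - ε : ℝ) : EReal) := by
    refine eventually_all.2 fun Z => ?_
    by_cases hZ : s ∈ Z ∧ t ∉ Z
    · have hlt : p Z < ((∑ u ∈ Z, x u - 0 : ℝ) : EReal) := by
        rw [sub_zero]; exact (hx.1.2 Z).lt_of_ne fun h => hZ.2 (hnone Z h hZ.1)
      have hcont : Continuous fun ε : ℝ => ((∑ u ∈ Z, x u - ε : ℝ) : EReal) :=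
        continuous_coe_real_ereal.comp (continuous_const.sub continuous_id)
      exact ((hcont.tendsto 0).eventually_const_lt hlt).mono fun _ h _ _ => h.le
    · exact Eventually.of_forall fun ε hs ht => absurd ⟨hs, ht⟩ hZ
  obtain ⟨ε, ⟨hslackε, hεlt⟩, hεpos⟩ :=
    (((hslack.and (gt_mem_nhds (sub_pos.2 hst))).filter_mono nhdsWithin_le_nhds).and
      (self_mem_nhdsWithin : ∀ᶠ ε in 𝓝[>] (0 : ℝ), 0 < ε)).exists
  have hne : s ≠ t := by rintro rfl; exact lt_irrefl _ hst
  have h := hx.2 _ (memB_add_single_sub_single hx.1 hεpos.le hslackε)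
  rw [sum_sq_add_single_sub_single x hne] at h
  nlinarith

lemma IsMinNormPoint.isTight_filter_le (hx : IsMinNormPoint p x) (hsup : Supermodular p)
    {c : ℝ} (hne : (univ.filter fun u => c ≤ x u).Nonempty) :
    IsTight p x (univ.filter fun u => c ≤ x u) := by
  set A := univ.filter fun u => c ≤ x u
  have hsep : ∀ s t, ∃ Z, IsTight p x Z ∧ s ∈ Z ∧ (x t < x s → t ∉ Z) := by
    intro s t
    by_cases hst : x t < x s
    · obtain ⟨Z, hZ, hs, ht⟩ := hx.exists_isTight_mem_not_mem hst
      exact ⟨Z, hZ, hs, fun _ => ht⟩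
    · exact ⟨univ, hx.1.1.symm, mem_univ s, fun h => absurd h hst⟩
  choose Z hZ hsZ htZ using hsep
  set Y : α → Finset α := fun s => Aᶜ.inf (Z s)
  have hY : ∀ s, IsTight p x (Y s) := fun s =>
    inf_induction hx.1.1.symm (fun _ h₁ _ h₂ => (h₁.inter_union hsup hx.1 h₂).1)
      fun t _ => hZ s t
  have hsY : ∀ s, s ∈ Y s := fun s => mem_inf.2 fun t _ => hsZ s t
  have hYA : ∀ s ∈ A, Y s ⊆ A := by
    intro s hs u hu
    by_contra huA
    have hlt : x u < x s := by
      simp only [A, mem_filter, mem_univ, true_and, not_le] at hs huA; linarith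
    exact htZ s u hlt (mem_inf.1 hu u (mem_compl.2 huA))
  have hA : A.sup' hne Y = A :=
    le_antisymm (sup'_le _ _ hYA) fun s hs => le_sup' Y hs (hsY s)
  rw [← hA]
  exact sup'_induction hne Y (fun _ h₁ _ h₂ => (h₁.inter_union hsup hx.1 h₂).2) fun s _ => hY s

lemma IsMinNormPoint.sum_filter_le_le_of_memB (hx : IsMinNormPoint p x) (hsup : Supermodular p)
    {y : α → ℝ} (hy : memB p y) (c : ℝ) :
    ∑ u ∈ univ.filter (fun u => c ≤ x u), x u ≤ ∑ u ∈ univ.filter (fun u => c ≤ x u), y u := by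
  rcases (univ.filter fun u => c ≤ x u).eq_empty_or_nonempty with h | h
  · simp only [h, sum_empty, le_refl]
  · have := hy.2 (univ.filter fun u => c ≤ x u)
    rwa [hx.isTight_filter_le hsup h, EReal.coe_le_coe_iff] at this

end Tight

theorem min_norm_point_minimizes_Wbar_general (p : Finset α → EReal) (hsup : Supermodular p)
    (mR : α → ℝ) (hmR : memB p mR)
    (hsq : ∀ y : α → ℝ, memB p y → (∑ s, (mR s) ^ 2) ≤ ∑ s, (y s) ^ 2) :
    ∀ y : α → ℝ, memB p y → Wbar mR ≤ Wbar y := by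
  intro y hy
  have hsum : ∑ u, (y u - mR u) = 0 := by
    rw [sum_sub_distrib, sub_eq_zero]
    exact_mod_cast hy.1.trans hmR.1.symm
  have hfloor : 0 ≤ ∑ u, (⌊mR u⌋ : ℝ) * (y u - mR u) := by
    refine sum_intCast_mul_nonneg_of_sum_superlevel_nonneg _ _ _ hsum fun k => ?_
    simp only [Int.le_floor, sum_sub_distrib, sub_nonneg]
    exact (show IsMinNormPoint p mR from ⟨hmR, hsq⟩).sum_filter_le_le_of_memB hsup hy k
  calc Wbar mR ≤ ∑ u, (phibar (mR u) + (2 * ⌊mR u⌋ + 1) * (y u - mR u)) := by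
        simp only [Wbar, sum_add_distrib, add_mul, one_mul, mul_assoc, ← mul_sum, hsum]
        linarith
    _ ≤ Wbar y := sum_le_sum fun u _ => phibar_add_floor_mul_sub_le _ _

/-- The minimum norm point of an integral base-polyhedron (the unique square-sum
minimizer over `B`) is also a minimizer of the piecewise-linear function `W̄` over `B`. -/
theorem min_norm_point_minimizes_Wbar (p : Finset α → EReal) (hp0 : p ∅ = 0)
    (hfin : p (Finset.univ : Finset α) ≠ ⊥) (hsup : Supermodular p)
    (hint : IntegerValued p) (mR : α → ℝ) (hmR : memB p mR)
    (hsq : ∀ y : α → ℝ, memB p y → (∑ s, (mR s) ^ 2) ≤ ∑ s, (y s) ^ 2) :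
    ∀ y : α → ℝ, memB p y → Wbar mR ≤ Wbar y :=
  min_norm_point_minimizes_Wbar_general p hsup mR hmR hsq
end

section
/- In the Fujishige-type decomposition algorithm, with a := ⌊p(S)/|S|⌋ and z ∈ B ∩ ℤ^S satisfying the relaxed exchange condition (z(s) ≤ a, z(t) ≥ a+1, z(t) ≥ z(s)+2 imply z + χ_s − χ_t ∉ B ∩ ℤ^S), the sets S₊ := ∪_{t: z(t) ≥ a+2} {s : z + χ_s − χ_t ∈ B ∩ ℤ^S} and S₋ := ∪_{s: z(s) ≤ a−1} {t : z + χ_s − χ_t ∈ B ∩ ℤ^S} satisfy S₊ ≠ S and S₋ ≠ S. -/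
/-!
Since `a = ⌊p(S)/|S|⌋` and `z(S) = p(S)`, the mean value of `z` lies in `[a, a + 1)`. Hence
some `s` has `z(s) ≤ a`; if `s ∈ S₊`, the witnessing `t` has `z(t) ≥ a + 2`, and the relaxed
exchange condition forbids `z + χ_s − χ_t ∈ B`. Dually, if `S₋ = S` then some `z(s) ≤ a − 1`,
so, the mean being at least `a`, some `t` has `z(t) ≥ a + 1`; the element `s'` witnessing
`t ∈ S₋` again contradicts the relaxed exchange condition.
-/

open Finset

variable {α : Type*} [Fintype α] [DecidableEq α]

/-- The vector `z + χ_s − χ_t`. -/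
def move (z : α → ℤ) (s t : α) : α → ℤ :=
  fun u => z u + (if u = s then 1 else 0) - (if u = t then 1 else 0)

theorem exists_lt_of_sum_le_of_lt {ι M : Type*} [AddCommMonoid M] [LinearOrder M]
    [IsOrderedCancelAddMonoid M] {s : Finset ι} {f g : ι → M}
    (hle : ∑ i ∈ s, f i ≤ ∑ i ∈ s, g i) {j : ι} (hj : j ∈ s) (hlt : g j < f j) :
    ∃ i ∈ s, f i < g i := by
  by_contra! hge
  exact (sum_lt_sum hge ⟨j, hj, hlt⟩).not_ge hle

section Decomposition

variable (p : Finset α → EReal) (a : ℤ) (z : α → ℤ)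

def RelaxedExchange : Prop :=
  ∀ s t : α, z s ≤ a → a + 1 ≤ z t → z s + 2 ≤ z t → ¬ memBZ p (move z s t)

def splus : Set α := {s | ∃ t, a + 2 ≤ z t ∧ memBZ p (move z s t)}

def sminus : Set α := {t | ∃ s, z s ≤ a - 1 ∧ memBZ p (move z s t)}

variable {p a z}

theorem splus_ne_univ (hrelax : RelaxedExchange p a z) {s : α} (hs : z s ≤ a) :
    splus p a z ≠ Set.univ := by
  intro hU
  obtain ⟨t, ht, hmove⟩ : s ∈ splus p a z := hU ▸ Set.mem_univ s
  exact hrelax s t hs (by omega) (by omega) hmove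

theorem sminus_ne_univ [Nonempty α] (hrelax : RelaxedExchange p a z)
    (hmean : ∑ _u : α, a ≤ ∑ u, z u) : sminus p a z ≠ Set.univ := by
  intro hU
  have hall : ∀ t, ∃ s, z s ≤ a - 1 ∧ memBZ p (move z s t) :=
    Set.eq_univ_iff_forall.mp hU
  obtain ⟨s, hs, -⟩ := hall (Classical.arbitrary α)
  obtain ⟨t, -, ht⟩ := exists_lt_of_sum_le_of_lt hmean (mem_univ s) (by omega : z s < a)
  obtain ⟨s', hs', hmove⟩ := hall t
  exact hrelax s' t (by omega) (by omega) (by omega) hmove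

end Decomposition

theorem Splus_Sminus_proper_general (p : Finset α → EReal)
    (pS : ℤ) (hpS : p (Finset.univ : Finset α) = ((pS : ℝ) : EReal))
    (a : ℤ) (ha1 : a * (Fintype.card α : ℤ) ≤ pS)
    (ha2 : pS < (a + 1) * (Fintype.card α : ℤ))
    (z : α → ℤ) (hz : memBZ p z)
    (hrelax : ∀ s t : α, z s ≤ a → a + 1 ≤ z t → z s + 2 ≤ z t → ¬ memBZ p (move z s t)) :
    ({s : α | ∃ t : α, a + 2 ≤ z t ∧ memBZ p (move z s t)} ≠ Set.univ) ∧
    ({t : α | ∃ s : α, z s ≤ a - 1 ∧ memBZ p (move z s t)} ≠ Set.univ) := by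
  have hsum : ∑ u, z u = pS := by
    have h := hz.1
    rw [hpS] at h
    exact_mod_cast h
  have : Nonempty α := Fintype.card_pos_iff.mp (by zify; linarith)
  have hlow : ∑ _u : α, a ≤ ∑ u, z u := by
    simp only [sum_const, card_univ, nsmul_eq_mul, hsum]
    linarith
  have hhigh : ∑ u, z u < ∑ _u : α, (a + 1) := by
    simp only [sum_const, card_univ, nsmul_eq_mul, hsum]
    linarith
  obtain ⟨s, -, hs⟩ := exists_lt_of_sum_lt hhigh
  exact ⟨splus_ne_univ hrelax (by omega : z s ≤ a), sminus_ne_univ hrelax hlow⟩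

/-- In the Fujishige-type decomposition algorithm, with `a = ⌊p(S)/|S|⌋` and `z`
satisfying the relaxed exchange condition, the sets `S₊` and `S₋` of
(\ref{basedecalgS+Z})–(\ref{basedecalgS-Z}) satisfy `S₊ ≠ S` and `S₋ ≠ S`. -/
theorem Splus_Sminus_proper [Nonempty α] (p : Finset α → EReal) (hp0 : p ∅ = 0)
    (hsup : Supermodular p) (hint : IntegerValued p)
    (pS : ℤ) (hpS : p (Finset.univ : Finset α) = ((pS : ℝ) : EReal))
    (a : ℤ) (ha1 : a * (Fintype.card α : ℤ) ≤ pS)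
    (ha2 : pS < (a + 1) * (Fintype.card α : ℤ))
    (z : α → ℤ) (hz : memBZ p z)
    (hrelax : ∀ s t : α, z s ≤ a → a + 1 ≤ z t → z s + 2 ≤ z t → ¬ memBZ p (move z s t)) :
    ({s : α | ∃ t : α, a + 2 ≤ z t ∧ memBZ p (move z s t)} ≠ Set.univ) ∧
    ({t : α | ∃ s : α, z s ≤ a - 1 ∧ memBZ p (move z s t)} ≠ Set.univ) :=
  Splus_Sminus_proper_general p pS hpS a ha1 ha2 z hz hrelax
end
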